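/- arXiv:2506.21192 — 2 statements merged into one kernel-verified Lean document; each statement's English description precedes it below -/
import Mathlib

section
/- Let X be an n×k real matrix of rank k, Ω an n×n positive definite matrix, and K a k×k positive definite matrix. Then K X^T (Ω + X K X^T)^{-1} = K X^T (I_n + X K X^T)^{-1} holds if and only if Ω X = X, which in turn is equivalent to Ω having the form Ω = X (X^T X)^{-1} X^T + Z Δ Z^T for some positive definite (n−k)×(n−k) matrix Δ, where Z is any n×(n−k) matrix with X^T Z = 0 and rank(Z) = n−k. -/
/-!
Write `S = X K Xᵀ`. The push-through identity `Xᵀ (1 + S) = (1 + Xᵀ X K) Xᵀ`, with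
`1 + Xᵀ X K` invertible by the Weinstein–Aronszajn identity, gives
`Xᵀ (1 + S)⁻¹ = (1 + Xᵀ X K)⁻¹ Xᵀ`. So, after cancelling `K`, the first equation holds iff
`Xᵀ (Ω + S) = (1 + Xᵀ X K) Xᵀ = Xᵀ (1 + S)`, that is, iff `Xᵀ Ω = Xᵀ`.

For the second equivalence let `P` and `Q` be the orthogonal projections onto the column spaces
of `X` and `Z`. These spaces are orthogonal complements, so `P + Q = 1`. If `Ω X = X` then
`Ω P = P Ω = P`, and expanding `Ω = (P + Q) Ω (P + Q)` leaves `Ω = P + Q Ω Q = P + Z Δ Zᵀ`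
with `Δ = (ZᵀZ)⁻¹ Zᵀ Ω Z (ZᵀZ)⁻¹`, which is positive definite because `Z (ZᵀZ)⁻¹` is injective.
Conversely `P X = X` and `Zᵀ X = 0`.
-/

open Matrix

theorem eq_add_one_sub_mul_mul_one_sub {R : Type*} [Ring R] {p ω : R} (hp : IsIdempotentElem p)
    (hωp : ω * p = p) (hpω : p * ω = p) : ω = p + (1 - p) * ω * (1 - p) := by
  simp only [sub_mul, mul_sub, one_mul, mul_one, hωp, hpω, hp.eq]
  abel

namespace Matrix

variable {m n p q R 𝕜 : Type*}

section CommRing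

variable [CommRing R] [Fintype m] [Fintype n] [DecidableEq n]

theorem mul_inv_add_mul_eq_mul_inv_one_add_mul_iff [DecidableEq m] (Ω : Matrix n n R)
    (U : Matrix n m R) (V : Matrix m n R) (hA : IsUnit (Ω + U * V).det) (hB : IsUnit (1 + U * V).det) :
    V * (Ω + U * V)⁻¹ = V * (1 + U * V)⁻¹ ↔ V * Ω = V := by
  have hC : IsUnit (1 + V * U).det := det_one_add_mul_comm U V ▸ hB
  let _ := invertibleOfIsUnitDet _ hA
  let _ := invertibleOfIsUnitDet _ hB
  let _ := invertibleOfIsUnitDet _ hC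
  have push_through : V * (1 + U * V)⁻¹ = (1 + V * U)⁻¹ * V := by
    rw [mul_inv_eq_iff_eq_mul_of_invertible, Matrix.mul_assoc, eq_comm,
      inv_mul_eq_iff_eq_mul_of_invertible]
    simp only [Matrix.mul_add, Matrix.add_mul, Matrix.mul_one, Matrix.one_mul, Matrix.mul_assoc]
  rw [push_through, mul_inv_eq_iff_eq_mul_of_invertible, Matrix.mul_assoc, eq_comm,
    inv_mul_eq_iff_eq_mul_of_invertible]
  simp only [Matrix.add_mul, Matrix.mul_add, Matrix.one_mul, Matrix.mul_assoc, add_left_inj]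

noncomputable def colSpaceProj (X : Matrix m n R) : Matrix m m R := X * (Xᵀ * X)⁻¹ * Xᵀ

variable {X : Matrix m n R}

theorem colSpaceProj_mul_self (hX : IsUnit (Xᵀ * X).det) : colSpaceProj X * X = X := by
  rw [colSpaceProj, Matrix.mul_assoc, Matrix.mul_assoc, nonsing_inv_mul _ hX, Matrix.mul_one]

theorem isIdempotentElem_colSpaceProj (hX : IsUnit (Xᵀ * X).det) :
    IsIdempotentElem (colSpaceProj X) := by
  show colSpaceProj X * (X * (Xᵀ * X)⁻¹ * Xᵀ) = colSpaceProj X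
  rw [← Matrix.mul_assoc, ← Matrix.mul_assoc, colSpaceProj_mul_self hX]
  rfl

theorem eq_colSpaceProj_add_of_mul_eq_self [DecidableEq m] {Ω : Matrix m m R} (hΩ : Ωᵀ = Ω)
    (hX : IsUnit (Xᵀ * X).det) (hΩX : Ω * X = X) :
    Ω = colSpaceProj X + (1 - colSpaceProj X) * Ω * (1 - colSpaceProj X) := by
  have hXΩ : Xᵀ * Ω = Xᵀ := by rw [← hΩ, ← transpose_mul, hΩX]
  refine eq_add_one_sub_mul_mul_one_sub (isIdempotentElem_colSpaceProj hX) ?_ ?_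
  · rw [colSpaceProj, ← Matrix.mul_assoc, ← Matrix.mul_assoc, hΩX]
  · rw [colSpaceProj, Matrix.mul_assoc, hXΩ]

theorem colSpaceProj_add_colSpaceProj_eq_one [DecidableEq m] [Fintype p] [DecidableEq p]
    [Fintype q] [DecidableEq q] {X : Matrix m p R} {Z : Matrix m q R}
    (hcard : Fintype.card p + Fintype.card q = Fintype.card m)
    (hX : IsUnit (Xᵀ * X).det) (hZ : IsUnit (Zᵀ * Z).det) (hXZ : Xᵀ * Z = 0) :
    colSpaceProj X + colSpaceProj Z = 1 := by
  have hZX : Zᵀ * X = 0 := by rw [← transpose_eq_zero, transpose_mul, transpose_transpose, hXZ]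
  have left_inverse : fromRows ((Xᵀ * X)⁻¹ * Xᵀ) ((Zᵀ * Z)⁻¹ * Zᵀ) * fromCols X Z = 1 := by
    rw [fromRows_mul_fromCols, Matrix.mul_assoc, Matrix.mul_assoc, Matrix.mul_assoc,
      Matrix.mul_assoc, hXZ, hZX, nonsing_inv_mul _ hX, nonsing_inv_mul _ hZ,
      Matrix.mul_zero, Matrix.mul_zero, fromBlocks_one]
  have e : m ≃ p ⊕ q := Fintype.equivOfCardEq (by rw [Fintype.card_sum, hcard])
  have := (fromCols_mul_fromRows_eq_one_comm e X Z _ _).mpr left_inverse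
  rwa [fromCols_mul_fromRows, ← Matrix.mul_assoc, ← Matrix.mul_assoc] at this

end CommRing

theorem mulVec_injective_of_rank_eq_card [Field 𝕜] [Fintype n] {A : Matrix m n 𝕜}
    (h : A.rank = Fintype.card n) : Function.Injective A.mulVec := by
  rw [mulVec_injective_iff, linearIndependent_iff_card_eq_finrank_span, ← h,
    rank_eq_finrank_span_cols, Set.finrank]

theorem isUnit_det_transpose_mul_self_of_rank_eq_card [Field 𝕜] [LinearOrder 𝕜]
    [IsStrictOrderedRing 𝕜] [Fintype m] [Fintype n] [DecidableEq n] {A : Matrix m n 𝕜}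
    (h : A.rank = Fintype.card n) : IsUnit (Aᵀ * A).det := by
  rw [← isUnit_iff_isUnit_det, ← mulVec_injective_iff_isUnit]
  exact mulVec_injective_of_rank_eq_card (by rw [rank_transpose_mul_self, h])

section Real

theorem PosDef.transpose_eq {Ω : Matrix m m ℝ} (hΩ : Ω.PosDef) : Ωᵀ = Ω :=
  (isHermitian_iff_isSymm.mp hΩ.isHermitian).eq

variable [Fintype m] [Fintype n]

theorem PosDef.add_mul_mul_transpose {Ω : Matrix m m ℝ} (hΩ : Ω.PosDef) {K : Matrix n n ℝ}
    (hK : K.PosSemidef) (X : Matrix m n ℝ) : (Ω + X * K * Xᵀ).PosDef := by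
  simpa only [conjTranspose_eq_transpose_of_trivial] using
    hΩ.add_posSemidef (hK.mul_mul_conjTranspose_same X)

theorem PosDef.transpose_mul_mul_same {Ω : Matrix m m ℝ} (hΩ : Ω.PosDef) {B : Matrix m n ℝ}
    (hB : Function.Injective B.mulVec) : (Bᵀ * Ω * B).PosDef := by
  simpa only [conjTranspose_eq_transpose_of_trivial] using hΩ.conjTranspose_mul_mul_same hB

theorem mul_transpose_mul_inv_add_eq_iff_mul_eq_self [DecidableEq m] [DecidableEq n]
    {Ω : Matrix m m ℝ} (hΩ : Ω.PosDef) {K : Matrix n n ℝ} (hK : K.PosDef) (X : Matrix m n ℝ) :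
    K * Xᵀ * (Ω + X * K * Xᵀ)⁻¹ = K * Xᵀ * (1 + X * K * Xᵀ)⁻¹ ↔ Ω * X = X := by
  have hXΩ : Xᵀ * Ω = Xᵀ ↔ Ω * X = X := by
    rw [← transpose_inj, transpose_mul, transpose_transpose, hΩ.transpose_eq]
  have := hK.isUnit.invertible
  rw [Matrix.mul_assoc K, Matrix.mul_assoc K, Matrix.mul_right_inj_of_invertible,
    mul_inv_add_mul_eq_mul_inv_one_add_mul_iff _ _ _
      ((hΩ.add_mul_mul_transpose hK.posSemidef X).isUnit.map detMonoidHom)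
      ((PosDef.one.add_mul_mul_transpose hK.posSemidef X).isUnit.map detMonoidHom), hXΩ]

theorem mul_eq_self_iff_exists_posDef_eq_colSpaceProj_add [DecidableEq m] [Fintype p]
    [DecidableEq p] [Fintype q] [DecidableEq q] {X : Matrix m p ℝ} {Z : Matrix m q ℝ}
    (hcard : Fintype.card p + Fintype.card q = Fintype.card m)
    (hX : X.rank = Fintype.card p) (hZ : Z.rank = Fintype.card q) (hXZ : Xᵀ * Z = 0)
    {Ω : Matrix m m ℝ} (hΩ : Ω.PosDef) :
    Ω * X = X ↔ ∃ Δ : Matrix q q ℝ, Δ.PosDef ∧ Ω = colSpaceProj X + Z * Δ * Zᵀ := by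
  have hXX := isUnit_det_transpose_mul_self_of_rank_eq_card hX
  have hZZ := isUnit_det_transpose_mul_self_of_rank_eq_card hZ
  constructor
  · intro hΩX
    set M := (Zᵀ * Z)⁻¹ with hM
    have hMsymm : Mᵀ = M := by rw [transpose_nonsing_inv, transpose_mul, transpose_transpose]
    have hZM : Function.Injective (Z * M).mulVec := fun v w h =>
      mulVec_injective_of_isUnit (isUnit_nonsing_inv_iff.2 ((isUnit_iff_isUnit_det _).2 hZZ))
        (mulVec_injective_of_rank_eq_card hZ (by simpa only [mulVec_mulVec] using h))
    refine ⟨(Z * M)ᵀ * Ω * (Z * M), hΩ.transpose_mul_mul_same hZM, ?_⟩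
    conv_lhs => rw [eq_colSpaceProj_add_of_mul_eq_self hΩ.transpose_eq hXX hΩX]
    rw [← eq_sub_of_add_eq' (colSpaceProj_add_colSpaceProj_eq_one hcard hXX hZZ hXZ)]
    simp only [colSpaceProj, ← hM, transpose_mul, hMsymm, Matrix.mul_assoc]
  · rintro ⟨Δ, -, rfl⟩
    have hZX : Zᵀ * X = 0 := by rw [← transpose_eq_zero, transpose_mul, transpose_transpose, hXZ]
    rw [Matrix.add_mul, colSpaceProj_mul_self hXX, Matrix.mul_assoc, hZX, Matrix.mul_zero,
      add_zero]

end Real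

end Matrix

theorem stmt_12_general {n k : ℕ}
    (X : Matrix (Fin n) (Fin k) ℝ) (hX : X.rank = k)
    (Z : Matrix (Fin n) (Fin (n - k)) ℝ) (hXZ : Xᵀ * Z = 0) (hZ : Z.rank = n - k)
    (Ω : Matrix (Fin n) (Fin n) ℝ) (hΩ : Ω.PosDef)
    (K : Matrix (Fin k) (Fin k) ℝ) (hK : K.PosDef) :
    (K * Xᵀ * (Ω + X * K * Xᵀ)⁻¹ = K * Xᵀ * (1 + X * K * Xᵀ)⁻¹ ↔ Ω * X = X) ∧
    (Ω * X = X ↔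
      ∃ Δ : Matrix (Fin (n - k)) (Fin (n - k)) ℝ, Δ.PosDef ∧
        Ω = X * (Xᵀ * X)⁻¹ * Xᵀ + Z * Δ * Zᵀ) := by
  have hkn : k ≤ n := by simpa [hX] using X.rank_le_card_height
  exact ⟨mul_transpose_mul_inv_add_eq_iff_mul_eq_self hΩ hK X,
    mul_eq_self_iff_exists_posDef_eq_colSpaceProj_add (by simp only [Fintype.card_fin]; omega)
      (by rw [hX, Fintype.card_fin]) (by rw [hZ, Fintype.card_fin]) hXZ hΩ⟩

theorem stmt_12 {n k : ℕ} (hnk : k < n)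
    (X : Matrix (Fin n) (Fin k) ℝ) (hX : X.rank = k)
    (Z : Matrix (Fin n) (Fin (n - k)) ℝ) (hXZ : Xᵀ * Z = 0) (hZ : Z.rank = n - k)
    (Ω : Matrix (Fin n) (Fin n) ℝ) (hΩ : Ω.PosDef)
    (K : Matrix (Fin k) (Fin k) ℝ) (hK : K.PosDef) :
    (K * Xᵀ * (Ω + X * K * Xᵀ)⁻¹ = K * Xᵀ * (1 + X * K * Xᵀ)⁻¹ ↔ Ω * X = X) ∧
    (Ω * X = X ↔
      ∃ Δ : Matrix (Fin (n - k)) (Fin (n - k)) ℝ, Δ.PosDef ∧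
        Ω = X * (Xᵀ * X)⁻¹ * Xᵀ + Z * Δ * Zᵀ) :=
  stmt_12_general X hX Z hXZ hZ Ω hΩ K hK
end

section
/- Let X be n×k of rank k, Ω = X Γ X^T + X Ξ Z^T + Z Ξ^T X^T + Z Δ Z^T an n×n positive definite matrix in the representation of Lemma (Orep), and K₁, K₂ k×k positive semidefinite. Define S = (Ω + X K₁ X^T)^{-1} and T = (I_n + X K₂ X^T)^{-1}. Then S Ω S = T T (equivalently, RSS_{BL}(Ω,K₁) = RSS_{BL}(I_n,K₂) for all y) if and only if Ξ = 0, Δ = (Z^T Z)^{-1} (i.e., Ω = X Γ X^T + Z (Z^T Z)^{-1} Z^T), and (Γ + K₁) Γ^{-1} (Γ + K₁) = [(X^T X)^{-1} + K₂] X^T X [(X^T X)^{-1} + K₂]. -/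
/-!
Put `P = [X Z]`. Since `Xᵀ Z = 0` and both blocks have full column rank, `P` is a square
invertible matrix with `Pᵀ P = G = diag(Xᵀ X, Zᵀ Z)`, so `1 = P G⁻¹ Pᵀ`, `Ω = P W Pᵀ` with
`W = [[Γ, Ξ], [Ξᵀ, Δ]]`, and `X K Xᵀ = P diag(K, 0) Pᵀ`. Inverting both sides,
`S Ω S = T T` becomes `(Ω + X K₁ Xᵀ) Ω⁻¹ (Ω + X K₁ Xᵀ) = (1 + X K₂ Xᵀ)²`, and the congruence
`U ↦ P U Pᵀ` (injective, with `(P U Pᵀ)(P V Pᵀ) = P (U G V) Pᵀ`) turns this into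
`(W + D₁) W⁻¹ (W + D₁) = (G⁻¹ + D₂) G (G⁻¹ + D₂)` with `Dᵢ = diag(Kᵢ, 0)`.
By `(A + D) A⁻¹ (A + D) = A + 2D + D A⁻¹ D`, the two sides differ from `W` and `G⁻¹` only in
the upper left block, so the off-diagonal and lower right blocks give `Ξ = 0` and
`Δ = (Zᵀ Z)⁻¹`; then `W` is block diagonal and the upper left block is the stated identity.
-/

open Matrix

theorem add_mul_mul_add_of_mul_eq_one {α : Type*} [Ring α] {a v : α} (hav : a * v = 1)
    (hva : v * a = 1) (d : α) :
    (a + d) * v * (a + d) = a + d + d + d * v * d := by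
  simp only [add_mul, mul_add, hav, one_mul, mul_assoc, hva, mul_one]
  abel

namespace Matrix

variable {ι κ R : Type*}

theorem fromCols_mul_fromBlocks_mul_transpose {κ₁ κ₂ : Type*} [Fintype κ₁] [Fintype κ₂]
    [Semiring R] (X : Matrix ι κ₁ R) (Z : Matrix ι κ₂ R) (a : Matrix κ₁ κ₁ R)
    (b : Matrix κ₁ κ₂ R) (c : Matrix κ₂ κ₁ R) (d : Matrix κ₂ κ₂ R) :
    fromCols X Z * fromBlocks a b c d * (fromCols X Z)ᵀ =
      X * a * Xᵀ + X * b * Zᵀ + Z * c * Xᵀ + Z * d * Zᵀ := by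
  rw [transpose_fromCols, fromCols_mul_fromBlocks, fromCols_mul_fromRows]
  simp only [Matrix.add_mul]
  abel

theorem transpose_fromCols_mul_fromCols_of_transpose_mul_eq_zero {κ₁ κ₂ : Type*} [Fintype ι]
    [CommSemiring R] {X : Matrix ι κ₁ R} {Z : Matrix ι κ₂ R} (h : Xᵀ * Z = 0) :
    (fromCols X Z)ᵀ * fromCols X Z = fromBlocks (Xᵀ * X) 0 0 (Zᵀ * Z) := by
  rw [transpose_fromCols, fromRows_mul_fromCols, h, ← transpose_transpose (Zᵀ * X), transpose_mul,
    transpose_transpose, h, transpose_zero]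

variable [Fintype ι] [Fintype κ]

theorem isUnit_of_rank_eq_card [DecidableEq ι] {K : Type*} [Field K] {A : Matrix ι ι K}
    (h : A.rank = Fintype.card ι) : IsUnit A := by
  rw [← mulVec_surjective_iff_isUnit, ← coe_mulVecLin, ← LinearMap.range_eq_top]
  apply Submodule.eq_top_of_finrank_eq
  rw [← rank, h, Module.finrank_fintype_fun_eq_card]

theorem inv_mul_mul_inv_eq_inv_mul_inv_iff [DecidableEq ι] [CommRing R] {A B C : Matrix ι ι R}
    (hA : IsUnit A) (hB : IsUnit B) (hC : IsUnit C) :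
    A⁻¹ * C * A⁻¹ = B⁻¹ * B⁻¹ ↔ A * C⁻¹ * A = B * B := by
  have hA' := (isUnit_iff_isUnit_det A).mp hA
  have hC' := (isUnit_iff_isUnit_det C).mp hC
  have inv_lhs : (A⁻¹ * C * A⁻¹)⁻¹ = A * C⁻¹ * A := by
    rw [mul_inv_rev, mul_inv_rev, nonsing_inv_nonsing_inv _ hA', Matrix.mul_assoc]
  have inv_rhs : (B⁻¹ * B⁻¹)⁻¹ = B * B := by
    rw [mul_inv_rev, nonsing_inv_nonsing_inv _ ((isUnit_iff_isUnit_det B).mp hB)]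
  rw [← inv_lhs, ← inv_rhs]
  refine ⟨congrArg Inv.inv, fun h => inv_inj h ?_⟩
  simp [det_mul, hA', hC']

section Congruence

variable [CommRing R] {P : Matrix ι κ R}

theorem mul_mul_transpose_mul_mul_mul_transpose (U V : Matrix κ κ R) :
    P * U * Pᵀ * (P * V * Pᵀ) = P * (U * (Pᵀ * P) * V) * Pᵀ := by
  simp only [Matrix.mul_assoc]

variable [DecidableEq κ]

theorem mul_mul_transpose_eq_iff (hP : IsUnit (Pᵀ * P)) {U V : Matrix κ κ R} :
    P * U * Pᵀ = P * V * Pᵀ ↔ U = V := by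
  have hP' := (isUnit_iff_isUnit_det _).mp hP
  have hL : (Pᵀ * P)⁻¹ * Pᵀ * P = 1 := by rw [Matrix.mul_assoc, nonsing_inv_mul _ hP']
  have hR : Pᵀ * P * (Pᵀ * P)⁻¹ = 1 := mul_nonsing_inv _ hP'
  have recover (W : Matrix κ κ R) : (Pᵀ * P)⁻¹ * Pᵀ * (P * W * Pᵀ) * P * (Pᵀ * P)⁻¹ = W := by
    calc (Pᵀ * P)⁻¹ * Pᵀ * (P * W * Pᵀ) * P * (Pᵀ * P)⁻¹
        = ((Pᵀ * P)⁻¹ * Pᵀ * P) * W * (Pᵀ * P * (Pᵀ * P)⁻¹) := by simp only [Matrix.mul_assoc]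
      _ = W := by rw [hL, hR, Matrix.one_mul, Matrix.mul_one]
  refine ⟨fun h => ?_, fun h => h ▸ rfl⟩
  rw [← recover U, h, recover V]

variable [DecidableEq ι]

theorem mul_inv_mul_transpose_eq_one (e : ι ≃ κ) (hP : IsUnit (Pᵀ * P)) :
    P * (Pᵀ * P)⁻¹ * Pᵀ = 1 := by
  rw [Matrix.mul_assoc, mul_eq_one_comm_of_equiv e, Matrix.mul_assoc,
    nonsing_inv_mul _ ((isUnit_iff_isUnit_det _).mp hP)]

theorem isUnit_of_isUnit_mul_mul_transpose (hP : IsUnit (Pᵀ * P))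
    (hP1 : P * (Pᵀ * P)⁻¹ * Pᵀ = 1) {U : Matrix κ κ R} (hU : IsUnit (P * U * Pᵀ)) :
    IsUnit U := by
  set V := (Pᵀ * P)⁻¹ * Pᵀ * (P * U * Pᵀ)⁻¹ * P * (Pᵀ * P)⁻¹
  have hV : P * V * Pᵀ = (P * U * Pᵀ)⁻¹ := by
    calc P * V * Pᵀ = P * (Pᵀ * P)⁻¹ * Pᵀ * (P * U * Pᵀ)⁻¹ * (P * (Pᵀ * P)⁻¹ * Pᵀ) := by
          simp only [V, Matrix.mul_assoc]
      _ = (P * U * Pᵀ)⁻¹ := by rw [hP1, Matrix.one_mul, Matrix.mul_one]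
  have hUV : U * (Pᵀ * P) * V = (Pᵀ * P)⁻¹ := by
    rw [← mul_mul_transpose_eq_iff hP, hP1, ← mul_mul_transpose_mul_mul_mul_transpose, hV,
      mul_nonsing_inv _ ((isUnit_iff_isUnit_det _).mp hU)]
  refine (isUnit_iff_isUnit_det U).mpr (isUnit_det_of_right_inverse (B := Pᵀ * P * V * (Pᵀ * P)) ?_)
  rw [show U * (Pᵀ * P * V * (Pᵀ * P)) = U * (Pᵀ * P) * V * (Pᵀ * P) by
    simp only [Matrix.mul_assoc], hUV, nonsing_inv_mul _ ((isUnit_iff_isUnit_det _).mp hP)]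

theorem mul_mul_transpose_mul_inv_mul (hP : IsUnit (Pᵀ * P)) (hP1 : P * (Pᵀ * P)⁻¹ * Pᵀ = 1)
    {U : Matrix κ κ R} (hU : IsUnit U) (V V' : Matrix κ κ R) :
    P * V * Pᵀ * (P * U * Pᵀ)⁻¹ * (P * V' * Pᵀ) = P * (V * U⁻¹ * V') * Pᵀ := by
  have hG := (isUnit_iff_isUnit_det _).mp hP
  have cancel_left (B : Matrix κ κ R) : Pᵀ * (P * ((Pᵀ * P)⁻¹ * B)) = B := by
    rw [← Matrix.mul_assoc, ← Matrix.mul_assoc, mul_nonsing_inv _ hG, Matrix.one_mul]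
  have cancel_right (B : Matrix κ κ R) : (Pᵀ * P)⁻¹ * (Pᵀ * (P * B)) = B := by
    rw [← Matrix.mul_assoc Pᵀ, nonsing_inv_mul_cancel_left _ _ hG]
  have hinv : (P * U * Pᵀ)⁻¹ = P * ((Pᵀ * P)⁻¹ * U⁻¹ * (Pᵀ * P)⁻¹) * Pᵀ := by
    refine inv_eq_right_inv ?_
    rw [mul_mul_transpose_mul_mul_mul_transpose, ← hP1]
    congr 2
    simp only [Matrix.mul_assoc, cancel_left,
      mul_nonsing_inv_cancel_left _ _ ((isUnit_iff_isUnit_det _).mp hU)]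
  rw [hinv, mul_mul_transpose_mul_mul_mul_transpose, mul_mul_transpose_mul_mul_mul_transpose]
  congr 2
  simp only [Matrix.mul_assoc, cancel_left, cancel_right]

end Congruence

section Blocks

variable {m o : Type*} [Fintype m] [Fintype o] [DecidableEq o] [CommRing R]

theorem fromBlocks_zero_mul_mul_fromBlocks_zero (K : Matrix m m R)
    (Y : Matrix (m ⊕ o) (m ⊕ o) R) :
    fromBlocks K 0 0 0 * Y * fromBlocks K 0 0 0 =
      fromBlocks (K * Y.toBlocks₁₁ * K) (0 : Matrix m o R) 0 0 := by
  rw [← fromBlocks_toBlocks Y]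
  simp [fromBlocks_multiply]

variable [DecidableEq m]

theorem inv_fromBlocks_zero_zero {A : Matrix m m R} {D : Matrix o o R} (hA : IsUnit A)
    (hD : IsUnit D) : (fromBlocks A 0 0 D)⁻¹ = fromBlocks A⁻¹ 0 0 D⁻¹ := by
  simp [inv_fromBlocks_zero₂₁_of_isUnit_iff A 0 D (iff_of_true hA hD)]

theorem fromBlocks_add_mul_inv_mul_add_eq_iff {Γ K₁ K₂ M : Matrix m m R} {Ξ : Matrix m o R}
    {Δ N : Matrix o o R} (hW : IsUnit (fromBlocks Γ Ξ Ξᵀ Δ)) (hM : IsUnit M) (hN : IsUnit N) :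
    (fromBlocks Γ Ξ Ξᵀ Δ + fromBlocks K₁ 0 0 0) * (fromBlocks Γ Ξ Ξᵀ Δ)⁻¹ *
        (fromBlocks Γ Ξ Ξᵀ Δ + fromBlocks K₁ 0 0 0) =
      ((fromBlocks M 0 0 N)⁻¹ + fromBlocks K₂ 0 0 0) * fromBlocks M 0 0 N *
        ((fromBlocks M 0 0 N)⁻¹ + fromBlocks K₂ 0 0 0) ↔
      Ξ = 0 ∧ Δ = N⁻¹ ∧ (Γ + K₁) * Γ⁻¹ * (Γ + K₁) = (M⁻¹ + K₂) * M * (M⁻¹ + K₂) := by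
  have hWd := (isUnit_iff_isUnit_det _).mp hW
  have hGd := (isUnit_iff_isUnit_det _).mp
    (isUnit_fromBlocks_zero₂₁.mpr ⟨hM, hN⟩ : IsUnit (fromBlocks M (0 : Matrix m o R) 0 N))
  have hMd := (isUnit_iff_isUnit_det _).mp hM
  rw [add_mul_mul_add_of_mul_eq_one (mul_nonsing_inv _ hWd) (nonsing_inv_mul _ hWd),
    add_mul_mul_add_of_mul_eq_one (nonsing_inv_mul _ hGd) (mul_nonsing_inv _ hGd),
    fromBlocks_zero_mul_mul_fromBlocks_zero, fromBlocks_zero_mul_mul_fromBlocks_zero,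
    inv_fromBlocks_zero_zero hM hN,
    add_mul_mul_add_of_mul_eq_one (nonsing_inv_mul _ hMd) (mul_nonsing_inv _ hMd)]
  simp only [fromBlocks_add, add_zero, fromBlocks_inj, toBlocks_fromBlocks₁₁]
  have block₁₁ (hΞ : Ξ = 0) (hΔ : Δ = N⁻¹) :
      Γ + K₁ + K₁ + K₁ * (fromBlocks Γ Ξ Ξᵀ Δ)⁻¹.toBlocks₁₁ * K₁ = (Γ + K₁) * Γ⁻¹ * (Γ + K₁) := by
    subst hΞ hΔ
    rw [transpose_zero] at hW ⊢
    have hΓ := (isUnit_fromBlocks_zero₂₁.mp hW).1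
    have hΓd := (isUnit_iff_isUnit_det _).mp hΓ
    rw [inv_fromBlocks_zero_zero hΓ (isUnit_nonsing_inv_iff.mpr hN), toBlocks_fromBlocks₁₁,
      add_mul_mul_add_of_mul_eq_one (mul_nonsing_inv _ hΓd) (nonsing_inv_mul _ hΓd)]
  constructor
  · rintro ⟨h₁₁, hΞ, -, hΔ⟩
    exact ⟨hΞ, hΔ, (block₁₁ hΞ hΔ).symm.trans h₁₁⟩
  · rintro ⟨hΞ, hΔ, h⟩
    exact ⟨(block₁₁ hΞ hΔ).trans h, hΞ, by rw [hΞ, transpose_zero], hΔ⟩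

end Blocks

end Matrix

theorem stmt_16_general {n k : ℕ} (hnk : k < n)
    (X : Matrix (Fin n) (Fin k) ℝ) (hX : X.rank = k)
    (Z : Matrix (Fin n) (Fin (n - k)) ℝ) (hXZ : Xᵀ * Z = 0) (hZ : Z.rank = n - k)
    (Γ : Matrix (Fin k) (Fin k) ℝ)
    (Δ : Matrix (Fin (n - k)) (Fin (n - k)) ℝ)
    (Ξ : Matrix (Fin k) (Fin (n - k)) ℝ)
    (Ω : Matrix (Fin n) (Fin n) ℝ)
    (hΩrep : Ω = X * Γ * Xᵀ + X * Ξ * Zᵀ + Z * Ξᵀ * Xᵀ + Z * Δ * Zᵀ)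
    (hΩ : Ω.PosDef)
    (K₁ K₂ : Matrix (Fin k) (Fin k) ℝ) (hK₁ : K₁.PosSemidef) (hK₂ : K₂.PosSemidef)
    (S T : Matrix (Fin n) (Fin n) ℝ)
    (hS : S = (Ω + X * K₁ * Xᵀ)⁻¹) (hT : T = (1 + X * K₂ * Xᵀ)⁻¹) :
    S * Ω * S = T * T ↔
      (Ξ = 0 ∧ Δ = (Zᵀ * Z)⁻¹ ∧
        (Γ + K₁) * Γ⁻¹ * (Γ + K₁) =
          ((Xᵀ * X)⁻¹ + K₂) * (Xᵀ * X) * ((Xᵀ * X)⁻¹ + K₂)) := by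
  obtain ⟨P, hPdef⟩ : ∃ P, P = fromCols X Z := ⟨_, rfl⟩
  have hM : IsUnit (Xᵀ * X) := isUnit_of_rank_eq_card (by simp [rank_transpose_mul_self, hX])
  have hN : IsUnit (Zᵀ * Z) := isUnit_of_rank_eq_card (by simp [rank_transpose_mul_self, hZ])
  have hG : Pᵀ * P = fromBlocks (Xᵀ * X) 0 0 (Zᵀ * Z) := by
    rw [hPdef, transpose_fromCols_mul_fromCols_of_transpose_mul_eq_zero hXZ]
  have hGu : IsUnit (Pᵀ * P) := by simp [hG, hM, hN]
  have hP1 : P * (Pᵀ * P)⁻¹ * Pᵀ = 1 :=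
    mul_inv_mul_transpose_eq_one ((finCongr (by omega)).trans finSumFinEquiv.symm) hGu
  have hXKX (K : Matrix (Fin k) (Fin k) ℝ) :
      X * K * Xᵀ =
        P * (fromBlocks K 0 0 0 : Matrix (Fin k ⊕ Fin (n - k)) (Fin k ⊕ Fin (n - k)) ℝ) * Pᵀ := by
    rw [hPdef, fromCols_mul_fromBlocks_mul_transpose]
    simp only [Matrix.mul_zero, Matrix.zero_mul, add_zero]
  have hΩP : Ω = P * fromBlocks Γ Ξ Ξᵀ Δ * Pᵀ := by
    rw [hΩrep, hPdef, fromCols_mul_fromBlocks_mul_transpose]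
  have hA : Ω + X * K₁ * Xᵀ = P * (fromBlocks Γ Ξ Ξᵀ Δ + fromBlocks K₁ 0 0 0) * Pᵀ := by
    rw [hXKX, hΩP, Matrix.mul_add, Matrix.add_mul]
  have hB : 1 + X * K₂ * Xᵀ = P * ((Pᵀ * P)⁻¹ + fromBlocks K₂ 0 0 0) * Pᵀ := by
    rw [hXKX, ← hP1, Matrix.mul_add, Matrix.add_mul]
  have hAu : IsUnit (Ω + X * K₁ * Xᵀ) :=
    (hΩ.add_posSemidef (by simpa using hK₁.mul_mul_conjTranspose_same X)).isUnit
  have hBu : IsUnit (1 + X * K₂ * Xᵀ) :=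
    (PosDef.one.add_posSemidef (by simpa using hK₂.mul_mul_conjTranspose_same X)).isUnit
  have hW : IsUnit (fromBlocks Γ Ξ Ξᵀ Δ) :=
    isUnit_of_isUnit_mul_mul_transpose hGu hP1 (by rw [← hΩP]; exact hΩ.isUnit)
  rw [hS, hT, inv_mul_mul_inv_eq_inv_mul_inv_iff hAu hBu hΩ.isUnit, hA, hB, hΩP,
    mul_mul_transpose_mul_inv_mul hGu hP1 hW, mul_mul_transpose_mul_mul_mul_transpose,
    mul_mul_transpose_eq_iff hGu, hG]
  exact fromBlocks_add_mul_inv_mul_add_eq_iff hW hM hN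

theorem stmt_16 {n k : ℕ} (hnk : k < n)
    (X : Matrix (Fin n) (Fin k) ℝ) (hX : X.rank = k)
    (Z : Matrix (Fin n) (Fin (n - k)) ℝ) (hXZ : Xᵀ * Z = 0) (hZ : Z.rank = n - k)
    (Γ : Matrix (Fin k) (Fin k) ℝ) (hΓ : Γ.PosDef)
    (Δ : Matrix (Fin (n - k)) (Fin (n - k)) ℝ) (hΔ : Δ.PosDef)
    (Ξ : Matrix (Fin k) (Fin (n - k)) ℝ)
    (Ω : Matrix (Fin n) (Fin n) ℝ)
    (hΩrep : Ω = X * Γ * Xᵀ + X * Ξ * Zᵀ + Z * Ξᵀ * Xᵀ + Z * Δ * Zᵀ)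
    (hΩ : Ω.PosDef)
    (K₁ K₂ : Matrix (Fin k) (Fin k) ℝ) (hK₁ : K₁.PosSemidef) (hK₂ : K₂.PosSemidef)
    (S T : Matrix (Fin n) (Fin n) ℝ)
    (hS : S = (Ω + X * K₁ * Xᵀ)⁻¹) (hT : T = (1 + X * K₂ * Xᵀ)⁻¹) :
    S * Ω * S = T * T ↔
      (Ξ = 0 ∧ Δ = (Zᵀ * Z)⁻¹ ∧
        (Γ + K₁) * Γ⁻¹ * (Γ + K₁) =
          ((Xᵀ * X)⁻¹ + K₂) * (Xᵀ * X) * ((Xᵀ * X)⁻¹ + K₂)) :=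
  stmt_16_general hnk X hX Z hXZ hZ Γ Δ Ξ Ω hΩrep hΩ K₁ K₂ hK₁ hK₂ S T hS hT
end
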